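/- arXiv:2103.02919 — 3 statements merged into one kernel-verified Lean document; each statement's English description precedes it below -/
import Mathlib

section
/- Let X, Y, P, Z be lists over an alphabet and let c be a character. Suppose X = X' ++ [c], Y = Y' ++ [c], P does not end in c (i.e. P is empty or P = P'' ++ [p] with p ≠ c), and Z is a constrained longest common subsequence of X and Y with respect to P. Then Z ends in c, i.e. Z = Z' ++ [c] for some list Z', and Z' is a constrained longest common subsequence of X' and Y' with respect to P. -/
/-- `Z` is a constrained common subsequence of `X` and `Y` with respect to `P`:
`Z` is a sublist (subsequence) of both `X` and `Y`, and `P` is a sublist of `Z`. -/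
def CCS {α : Type*} (X Y P Z : List α) : Prop :=
  Z.Sublist X ∧ Z.Sublist Y ∧ P.Sublist Z

/-- `Z` is a constrained longest common subsequence of `X` and `Y` with respect to `P`. -/
def CLCS {α : Type*} (X Y P Z : List α) : Prop :=
  CCS X Y P Z ∧ ∀ W : List α, CCS X Y P W → W.length ≤ Z.length

/-- The maximum length of a constrained common subsequence of `X` and `Y`
with respect to `P` (meaningful when some CCS exists). -/
noncomputable def clcsLen {α : Type*} (X Y P : List α) : ℕ :=
  sSup {n | ∃ Z : List α, CCS X Y P Z ∧ Z.length = n}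

/-!
A CLCS `Z` of `X' ++ [c]` and `Y' ++ [c]` must end in `c`: otherwise it is a common subsequence
of `X'` and `Y'`, and `Z ++ [c]` would be a longer CCS. Writing `Z = Z' ++ [c]`, the constraint `P`
cannot use that final `c` since `P` does not end in `c`, so `Z'` is a CCS of `X'` and `Y'`; and
appending `c` to any CCS of `X'` and `Y'` gives a CCS of `X` and `Y`, so `Z'` is longest.
-/

namespace List

variable {α : Type*}

theorem sublist_concat_iff {l r : List α} {a : α} :
    l <+ r ++ [a] ↔ l <+ r ∨ ∃ t, l = t ++ [a] ∧ t <+ r := by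
  rw [sublist_append_iff]
  constructor
  · rintro ⟨l₁, l₂, rfl, h₁, h₂⟩
    rcases sublist_singleton.mp h₂ with rfl | rfl
    · exact .inl (by simpa using h₁)
    · exact .inr ⟨l₁, rfl, h₁⟩
  · rintro (h | ⟨t, rfl, h⟩)
    · exact ⟨l, [], by simp, h, nil_sublist _⟩
    · exact ⟨t, [a], rfl, h, .refl _⟩

theorem Sublist.of_sublist_concat_of_getLast?_ne {l r : List α} {a : α} (h : l <+ r ++ [a])
    (hl : l.getLast? ≠ some a) : l <+ r := by
  rcases sublist_concat_iff.mp h with h | ⟨t, rfl, -⟩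
  · exact h
  · simp at hl

end List

section CCS

variable {α : Type*} {X Y P Z : List α} {c : α}

theorem CCS.concat (h : CCS X Y P Z) : CCS (X ++ [c]) (Y ++ [c]) P (Z ++ [c]) :=
  ⟨by simpa using h.1, by simpa using h.2.1, h.2.2.trans (List.sublist_append_left _ _)⟩

theorem CCS.of_concat (h : CCS (X ++ [c]) (Y ++ [c]) P (Z ++ [c])) (hP : P.getLast? ≠ some c) :
    CCS X Y P Z :=
  ⟨by simpa using h.1, by simpa using h.2.1, h.2.2.of_sublist_concat_of_getLast?_ne hP⟩

theorem CLCS.exists_eq_concat (h : CLCS (X ++ [c]) (Y ++ [c]) P Z) : ∃ Z', Z = Z' ++ [c] := by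
  obtain ⟨⟨hZX, hZY, hPZ⟩, hmax⟩ := h
  rcases List.sublist_concat_iff.mp hZX with hX | ⟨Z', hZ, -⟩
  · rcases List.sublist_concat_iff.mp hZY with hY | ⟨Z', hZ, -⟩
    · have := hmax _ (CCS.concat (c := c) ⟨hX, hY, hPZ⟩)
      simp at this
    · exact ⟨Z', hZ⟩
  · exact ⟨Z', hZ⟩

end CCS

theorem clcs_match_not_constraint {α : Type*} (X Y P Z X' Y' : List α) (c : α)
    (hX : X = X' ++ [c]) (hY : Y = Y' ++ [c])
    (hP : P = [] ∨ ∃ (P'' : List α) (p : α), P = P'' ++ [p] ∧ p ≠ c)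
    (hZ : CLCS X Y P Z) :
    ∃ Z' : List α, Z = Z' ++ [c] ∧ CLCS X' Y' P Z' := by
  subst hX hY
  have hPlast : P.getLast? ≠ some c := by
    rcases hP with rfl | ⟨P'', p, rfl, hpc⟩
    · simp
    · simpa using hpc
  obtain ⟨Z', rfl⟩ := hZ.exists_eq_concat
  exact ⟨Z', rfl, hZ.1.of_concat hPlast, fun W hW => by simpa using hZ.2 _ hW.concat⟩
end

section
/- Let X, Y, P be lists over an alphabet with X = X' ++ [x] and Y = Y' ++ [y] for characters x ≠ y, and suppose Z is a constrained longest common subsequence of X and Y with respect to P. Then Z is a constrained longest common subsequence of X' and Y with respect to P, or Z is a constrained longest common subsequence of X and Y' with respect to P. -/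
/-! A common subsequence of `X' ++ [x]` and `Y' ++ [y]` cannot use both final characters, since it
would then end in both `x` and `y`; so `Z` is a subsequence of `X'` or of `Y'`. Dropping a
character from `X` or `Y` only removes competitors, so `Z` remains longest. -/

namespace List

variable {α : Type*}

theorem sublist_or_eq_concat_of_sublist_concat {Z L : List α} {a : α} (h : Z <+ L ++ [a]) :
    Z <+ L ∨ ∃ Z', Z = Z' ++ [a] := by
  obtain ⟨u, v, rfl, hu, hv⟩ := sublist_append_iff.mp h
  rcases sublist_singleton.mp hv with rfl | rfl
  · exact Or.inl (by simpa using hu)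
  · exact Or.inr ⟨u, rfl⟩

theorem sublist_or_sublist_of_sublist_concat_of_ne {Z X Y : List α} {x y : α} (hxy : x ≠ y)
    (hX : Z <+ X ++ [x]) (hY : Z <+ Y ++ [y]) : Z <+ X ∨ Z <+ Y := by
  rcases sublist_or_eq_concat_of_sublist_concat hX with hZX | ⟨Z₁, rfl⟩
  · exact Or.inl hZX
  rcases sublist_or_eq_concat_of_sublist_concat hY with hZY | ⟨Z₂, hZ⟩
  · exact Or.inr hZY
  exact absurd (append_inj' hZ rfl).2 (by simpa using hxy)

end List

section

open List

variable {α : Type*} {X X' Y Y' P Z : List α}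

theorem CLCS.of_sublist_left (hZ : CLCS X Y P Z) (hX' : X' <+ X) (hZX' : Z <+ X') :
    CLCS X' Y P Z :=
  ⟨⟨hZX', hZ.1.2⟩, fun W ⟨hWX', hW⟩ => hZ.2 W ⟨hWX'.trans hX', hW⟩⟩

theorem CLCS.of_sublist_right (hZ : CLCS X Y P Z) (hY' : Y' <+ Y) (hZY' : Z <+ Y') :
    CLCS X Y' P Z :=
  ⟨⟨hZ.1.1, hZY', hZ.1.2.2⟩, fun W ⟨hWX, hWY', hPW⟩ => hZ.2 W ⟨hWX, hWY'.trans hY', hPW⟩⟩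

end

theorem clcs_mismatch_cases {α : Type*} (X Y P Z X' Y' : List α) (x y : α)
    (hxy : x ≠ y) (hX : X = X' ++ [x]) (hY : Y = Y' ++ [y])
    (hZ : CLCS X Y P Z) :
    CLCS X' Y P Z ∨ CLCS X Y' P Z := by
  subst hX hY
  rcases List.sublist_or_sublist_of_sublist_concat_of_ne hxy hZ.1.1 hZ.1.2.1 with hZX' | hZY'
  · exact Or.inl (hZ.of_sublist_left (List.sublist_append_left _ _) hZX')
  · exact Or.inr (hZ.of_sublist_right (List.sublist_append_left _ _) hZY')
end

section
/- Let X, Y, P be lists over an alphabet Σ such that P is a subsequence of both X and Y. Then the minimum, over all constrained alignments (X', Y') of X and Y with respect to P, of the alignment score under the distance function δ (δ(a,b) = -1 if a = b and 0 otherwise) equals the negative of clcsLen X Y P, the maximum length of a constrained common subsequence of X and Y with respect to P. -/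
/-- `(X', Y')` is an alignment of `X` and `Y`: equal lengths, removing the spaces
(`none` entries) gives back `X` resp. `Y`, and no column consists of two spaces. -/
def IsAlignment {σ : Type*} (X Y : List σ) (X' Y' : List (Option σ)) : Prop :=
  X'.length = Y'.length ∧
  X'.filterMap id = X ∧
  Y'.filterMap id = Y ∧
  ∀ p ∈ X'.zip Y', ¬(p.1 = none ∧ p.2 = none)

/-- The list of matching-column characters of an alignment. -/
def matchCols {σ : Type*} [DecidableEq σ] (X' Y' : List (Option σ)) : List σ :=
  (X'.zip Y').filterMap (fun p => if p.1 = p.2 then p.1 else none)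

/-- `(X', Y')` is a constrained alignment of `X` and `Y` with respect to `P`. -/
def IsConstrainedAlignment {σ : Type*} [DecidableEq σ] (X Y P : List σ)
    (X' Y' : List (Option σ)) : Prop :=
  IsAlignment X Y X' Y' ∧ P.Sublist (matchCols X' Y')

/-- The alignment score of `(X', Y')` under a distance function `δ`. -/
def score {σ : Type*} (δ : Option σ → Option σ → ℤ) (X' Y' : List (Option σ)) : ℤ :=
  ((X'.zip Y').map (fun p => δ p.1 p.2)).sum

/-- The distance function: `-1` on a match, `0` otherwise. -/
def delta {σ : Type*} [DecidableEq σ] (a b : Option σ) : ℤ :=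
  if a = b then -1 else 0

/-!
When no column consists of two spaces, a column scores `-1` exactly when it matches a character,
so the score of an alignment is minus the length of its matching-column list. That list is a
common subsequence of `X` and `Y`, and for a constrained alignment it contains `P`. Conversely,
every common subsequence `Z` is the matching-column list of the alignment that matches the letters
of `Z` and sets every other letter against a space. Hence the attainable scores are bounded below
by `-clcsLen X Y P`, and a longest constrained common subsequence attains it.
-/

namespace List

variable {σ : Type*} [DecidableEq σ]

theorem sum_map_delta_eq_neg_length_filterMap (L : List (Option σ × Option σ))
    (h : ∀ p ∈ L, ¬(p.1 = none ∧ p.2 = none)) :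
    (L.map fun p => delta p.1 p.2).sum
      = -(L.filterMap fun p => if p.1 = p.2 then p.1 else none).length := by
  induction L with
  | nil => rfl
  | cons p L ih =>
    obtain ⟨a, b⟩ := p
    simp only [mem_cons, forall_eq_or_imp] at h
    rw [map_cons, sum_cons, filterMap_cons, ih h.2]
    by_cases hab : a = b
    · subst hab
      obtain ⟨c, rfl⟩ := Option.ne_none_iff_exists'.mp fun ha => h.1 ⟨ha, ha⟩
      simp [delta]
    · simp [delta, hab]

end List

section matchCols

variable {σ : Type*} [DecidableEq σ]

theorem matchCols_comm (X' Y' : List (Option σ)) : matchCols X' Y' = matchCols Y' X' := by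
  unfold matchCols
  rw [← List.zip_swap, List.filterMap_map]
  congr 1
  funext ⟨a, b⟩
  by_cases hab : a = b <;> simp [hab, eq_comm]

theorem matchCols_eq_filterMap_fst (X' Y' : List (Option σ)) :
    matchCols X' Y' = ((X'.zip Y').filter fun p => p.1 = p.2).filterMap Prod.fst := by
  simp [matchCols, List.filterMap_filter]

theorem matchCols_sublist_filterMap_left {X' Y' : List (Option σ)}
    (h : X'.length ≤ Y'.length) : (matchCols X' Y').Sublist (X'.filterMap id) :=
  calc (matchCols X' Y').Sublist ((X'.zip Y').filterMap Prod.fst) := by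
        rw [matchCols_eq_filterMap_fst]
        exact List.filter_sublist.filterMap _
    _ = ((X'.zip Y').map Prod.fst).filterMap id := by
      rw [List.filterMap_map]; rfl
    _ = X'.filterMap id := by rw [List.map_fst_zip h]

end matchCols

namespace IsAlignment

variable {σ : Type*} {X Y : List σ} {X' Y' : List (Option σ)}

theorem cons_some_none (h : IsAlignment X Y X' Y') (a : σ) :
    IsAlignment (a :: X) Y (some a :: X') (none :: Y') := by
  obtain ⟨hlen, hX, hY, hcol⟩ := h
  exact ⟨by simp [hlen], hX ▸ rfl, hY ▸ rfl, by simpa using hcol⟩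

theorem cons_none_some (h : IsAlignment X Y X' Y') (b : σ) :
    IsAlignment X (b :: Y) (none :: X') (some b :: Y') := by
  obtain ⟨hlen, hX, hY, hcol⟩ := h
  exact ⟨by simp [hlen], hX ▸ rfl, hY ▸ rfl, by simpa using hcol⟩

theorem cons_some_some (h : IsAlignment X Y X' Y') (a b : σ) :
    IsAlignment (a :: X) (b :: Y) (some a :: X') (some b :: Y') := by
  obtain ⟨hlen, hX, hY, hcol⟩ := h
  exact ⟨by simp [hlen], hX ▸ rfl, hY ▸ rfl, by simpa using hcol⟩

variable [DecidableEq σ]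

theorem score_delta (h : IsAlignment X Y X' Y') :
    score delta X' Y' = -(matchCols X' Y').length :=
  List.sum_map_delta_eq_neg_length_filterMap _ h.2.2.2

theorem matchCols_sublist_left (h : IsAlignment X Y X' Y') : (matchCols X' Y').Sublist X :=
  h.2.1 ▸ matchCols_sublist_filterMap_left h.1.le

theorem matchCols_sublist_right (h : IsAlignment X Y X' Y') : (matchCols X' Y').Sublist Y :=
  matchCols_comm X' Y' ▸ h.2.2.1 ▸ matchCols_sublist_filterMap_left h.1.ge

end IsAlignment

theorem IsConstrainedAlignment.ccs_matchCols {σ : Type*} [DecidableEq σ] {X Y P : List σ}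
    {X' Y' : List (Option σ)} (h : IsConstrainedAlignment X Y P X' Y') :
    CCS X Y P (matchCols X' Y') :=
  ⟨h.1.matchCols_sublist_left, h.1.matchCols_sublist_right, h.2⟩

theorem exists_isAlignment_matchCols_eq {σ : Type*} [DecidableEq σ] {Z X Y : List σ}
    (hX : Z.Sublist X) (hY : Z.Sublist Y) :
    ∃ X' Y', IsAlignment X Y X' Y' ∧ matchCols X' Y' = Z := by
  induction hX generalizing Y with
  | slnil =>
    induction Y with
    | nil => exact ⟨[], [], ⟨rfl, rfl, rfl, by simp⟩, rfl⟩
    | cons b Y ih =>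
      obtain ⟨X', Y', hal, hmc⟩ := ih (List.nil_sublist Y)
      exact ⟨none :: X', some b :: Y', hal.cons_none_some b, by simpa [matchCols] using hmc⟩
  | cons a _ ih =>
    obtain ⟨X', Y', hal, hmc⟩ := ih hY
    exact ⟨some a :: X', none :: Y', hal.cons_some_none a, by simpa [matchCols] using hmc⟩
  | @cons_cons Z X a _ ih =>
    induction Y with
    | nil => cases hY
    | cons b Y ihY =>
      cases hY with
      | cons _ hY =>
        obtain ⟨X', Y', hal, hmc⟩ := ihY hY
        exact ⟨none :: X', some b :: Y', hal.cons_none_some b, by simpa [matchCols] using hmc⟩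
      | cons_cons _ hY =>
        obtain ⟨X', Y', hal, hmc⟩ := ih hY
        exact ⟨some a :: X', some a :: Y', hal.cons_some_some a a, by simpa [matchCols] using hmc⟩

section clcsLen

variable {α : Type*} {X Y P Z : List α}

theorem bddAbove_ccs_lengths (X Y P : List α) :
    BddAbove {n | ∃ Z : List α, CCS X Y P Z ∧ Z.length = n} :=
  ⟨X.length, by rintro _ ⟨Z, hZ, rfl⟩; exact hZ.1.length_le⟩

theorem CCS.length_le_clcsLen (hZ : CCS X Y P Z) : Z.length ≤ clcsLen X Y P :=
  le_csSup (bddAbove_ccs_lengths X Y P) ⟨Z, hZ, rfl⟩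

theorem exists_ccs_length_eq_clcsLen (hX : P.Sublist X) (hY : P.Sublist Y) :
    ∃ Z, CCS X Y P Z ∧ Z.length = clcsLen X Y P :=
  Nat.sSup_mem (s := {n | ∃ Z : List α, CCS X Y P Z ∧ Z.length = n})
    ⟨P.length, P, ⟨hX, hY, List.Sublist.refl P⟩, rfl⟩ (bddAbove_ccs_lengths X Y P)

end clcsLen

theorem min_alignment_score_eq_neg_clcsLen {σ : Type*} [DecidableEq σ]
    (X Y P : List σ) (h1 : P.Sublist X) (h2 : P.Sublist Y) :
    sInf {s : ℤ | ∃ X' Y' : List (Option σ),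
        IsConstrainedAlignment X Y P X' Y' ∧ score delta X' Y' = s}
      = -(clcsLen X Y P : ℤ) := by
  refine IsLeast.csInf_eq ⟨?_, ?_⟩
  · obtain ⟨Z, hZ, hlen⟩ := exists_ccs_length_eq_clcsLen h1 h2
    obtain ⟨X', Y', hal, hmc⟩ := exists_isAlignment_matchCols_eq hZ.1 hZ.2.1
    exact ⟨X', Y', ⟨hal, hmc ▸ hZ.2.2⟩, by rw [hal.score_delta, hmc, hlen]⟩
  · rintro s ⟨X', Y', hca, rfl⟩
    rw [hca.1.score_delta, neg_le_neg_iff, Nat.cast_le]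
    exact hca.ccs_matchCols.length_le_clcsLen
end
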